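/- Let n ≥ 1 and let P ∈ ℝ^{n×n} be row-stochastic with stationary distribution π ∈ (0,1)^n (π = πP, Σ_i π_i = 1). Let y_{i,t} ∈ ℝ^m satisfy y_{i,0} = 0 and y_{i,t+1} = Σ_{j=1}^n P_{ij} y_{j,t} + g_{i,t} for all i and t ≥ 0, where the vectors g_{i,t} ∈ ℝ^m satisfy ‖g_{i,t}‖_* ≤ L for some L ≥ 0, and let ȳ_t = Σ_{i=1}^n π_i y_{i,t}. Suppose there exist γ ∈ (0,1) and an integer ν ≥ 1 such that |(P^k)_{ij} − π_j| ≤ γ^{⌊k/ν⌋} for all integers k ≥ 1 and all i, j. Then for all i = 1,…,n and all t ≥ 0, ‖ȳ_t − y_{i,t}‖_* ≤ nL/(γ(1 − γ^{1/ν})) + 2L, where γ^{1/ν} is the real ν-th root of γ. -/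

import Mathlib

/-!
Unrolling the recursion gives `y_{i,t} = ∑_{s<t} ∑_l (P^s)_{il} g_{l,t-1-s}`, and since `π` is
stationary for every power of `P`, also `ȳ_t = ∑_{s<t} ∑_l π_l g_{l,t-1-s}`. The dual norm is
subadditive and absolutely homogeneous, so `‖ȳ_t - y_{i,t}‖_* ≤ L ∑_{s<t} ∑_l |(P^s)_{il} - π_l|`.
The `s = 0` term is at most `2`; for `s ≥ 1` mixing and `γ^{⌊s/ν⌋} ≤ β^s / γ` with `β = γ^{1/ν}`
bound the rest by a geometric series.
-/

open Finset
open scoped RealInnerProductSpace Matrix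

namespace Seminorm

variable {E : Type*} [NormedAddCommGroup E] [NormedSpace ℝ E] [FiniteDimensional ℝ E]

theorem continuous_of_finiteDimensional (p : Seminorm ℝ E) : Continuous p :=
  continuousOn_univ.1 (p.convexOn.continuousOn isOpen_univ)

theorem exists_pos_mul_norm_le (p : Seminorm ℝ E) (hp : ∀ x, p x = 0 → x = 0) :
    ∃ c > 0, ∀ x, c * ‖x‖ ≤ p x := by
  rcases subsingleton_or_nontrivial E with hE | hE
  · exact ⟨1, one_pos, fun x => by simp [Subsingleton.elim x 0]⟩
  obtain ⟨x₀, hx₀, hmin⟩ := (isCompact_sphere (0 : E) 1).exists_isMinOn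
    (NormedSpace.sphere_nonempty.2 zero_le_one) p.continuous_of_finiteDimensional.continuousOn
  have hx₀ : ‖x₀‖ = 1 := by simpa using hx₀
  have hpx₀ : 0 < p x₀ :=
    (apply_nonneg p x₀).lt_of_ne fun h => by simp [hp x₀ h.symm] at hx₀
  refine ⟨p x₀, hpx₀, fun x => ?_⟩
  rcases eq_or_ne x 0 with rfl | hx
  · simp
  have hnx : 0 < ‖x‖ := norm_pos_iff.2 hx
  have hunit : ‖x‖⁻¹ • x ∈ Metric.sphere (0 : E) 1 := by
    simp [norm_smul, hnx.ne']
  calc p x₀ * ‖x‖ ≤ p (‖x‖⁻¹ • x) * ‖x‖ := by gcongr; exact hmin hunit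
    _ = p x := by rw [map_smul_eq_mul, norm_inv, norm_norm]; field_simp

end Seminorm

section DualNorm

variable {E : Type*} [NormedAddCommGroup E] [InnerProductSpace ℝ E]

/-- `sSup` of an unbounded set is `0`; `bddAbove_inner_of_le_one` rules this out when `N` is a
norm on a finite-dimensional space. -/
noncomputable def dualNorm (N : E → ℝ) (v : E) : ℝ :=
  sSup {r : ℝ | ∃ a, N a ≤ 1 ∧ r = ⟪v, a⟫}

variable [FiniteDimensional ℝ E] {p : Seminorm ℝ E}

theorem bddAbove_inner_of_le_one (hp : ∀ x, p x = 0 → x = 0) (v : E) :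
    BddAbove {r : ℝ | ∃ a, p a ≤ 1 ∧ r = ⟪v, a⟫} := by
  obtain ⟨c, hc, hpc⟩ := p.exists_pos_mul_norm_le hp
  refine ⟨‖v‖ * (1 / c), ?_⟩
  rintro _ ⟨a, ha, rfl⟩
  have hna : ‖a‖ ≤ 1 / c := (le_div_iff₀' hc).2 ((hpc a).trans ha)
  exact (real_inner_le_norm v a).trans (by gcongr)

theorem inner_le_dualNorm (hp : ∀ x, p x = 0 → x = 0) (v : E) {a : E} (ha : p a ≤ 1) :
    ⟪v, a⟫ ≤ dualNorm p v :=
  le_csSup (bddAbove_inner_of_le_one hp v) ⟨a, ha, rfl⟩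

theorem abs_inner_le_dualNorm (hp : ∀ x, p x = 0 → x = 0) (v : E) {a : E} (ha : p a ≤ 1) :
    |⟪v, a⟫| ≤ dualNorm p v := by
  refine abs_le'.2 ⟨inner_le_dualNorm hp v ha, ?_⟩
  rw [← inner_neg_right]
  exact inner_le_dualNorm hp v (by rwa [map_neg_eq_map])

theorem dualNorm_nonneg (hp : ∀ x, p x = 0 → x = 0) (v : E) : 0 ≤ dualNorm p v := by
  simpa using inner_le_dualNorm hp v (a := 0) (by simp)

theorem dualNorm_add_le (hp : ∀ x, p x = 0 → x = 0) (v w : E) :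
    dualNorm p (v + w) ≤ dualNorm p v + dualNorm p w := by
  refine Real.sSup_le ?_ (add_nonneg (dualNorm_nonneg hp v) (dualNorm_nonneg hp w))
  rintro _ ⟨a, ha, rfl⟩
  rw [inner_add_left]
  exact add_le_add (inner_le_dualNorm hp v ha) (inner_le_dualNorm hp w ha)

theorem dualNorm_smul_le (hp : ∀ x, p x = 0 → x = 0) (c : ℝ) (v : E) :
    dualNorm p (c • v) ≤ |c| * dualNorm p v := by
  refine Real.sSup_le ?_ (mul_nonneg (abs_nonneg c) (dualNorm_nonneg hp v))
  rintro _ ⟨a, ha, rfl⟩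
  rw [real_inner_smul_left]
  calc c * ⟪v, a⟫ ≤ |c| * |⟪v, a⟫| := by rw [← abs_mul]; exact le_abs_self _
    _ ≤ |c| * dualNorm p v := by gcongr; exact abs_inner_le_dualNorm hp v ha

theorem dualNorm_sum_le (hp : ∀ x, p x = 0 → x = 0) {ι : Type*} (s : Finset ι) (v : ι → E) :
    dualNorm p (∑ i ∈ s, v i) ≤ ∑ i ∈ s, dualNorm p (v i) := by
  have hzero : dualNorm p 0 ≤ 0 := by
    simpa using dualNorm_smul_le hp 0 (0 : E)
  exact Finset.le_sum_of_subadditive _ hzero (dualNorm_add_le hp) s v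

end DualNorm

section Recurrence

variable {R E ι κ : Type*} [CommSemiring R] [AddCommMonoid E] [Module R E] [Fintype ι] [Fintype κ]

theorem sum_smul_sum_smul_eq_vecMul (v : ι → R) (B : Matrix ι κ R) (x : κ → E) :
    ∑ i, v i • ∑ l, B i l • x l = ∑ l, (v ᵥ* B) l • x l := by
  simp only [smul_sum, smul_smul, Matrix.vecMul, dotProduct, sum_smul]
  exact sum_comm

variable [DecidableEq ι]

theorem vecMul_pow_eq_self {v : ι → R} {P : Matrix ι ι R} (h : v ᵥ* P = v) (k : ℕ) :
    v ᵥ* P ^ k = v := by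
  induction k with
  | zero => simp
  | succ k ih => rw [pow_succ, ← Matrix.vecMul_vecMul, ih, h]

theorem eq_sum_pow_smul_of_recurrence {P : Matrix ι ι R} {y g : ι → ℕ → E}
    (hy0 : ∀ i, y i 0 = 0) (hyrec : ∀ i t, y i (t + 1) = ∑ j, P i j • y j t + g i t) :
    ∀ t i, y i t = ∑ s ∈ range t, ∑ l, (P ^ s) i l • g l (t - 1 - s) := by
  intro t
  induction t with
  | zero => simp [hy0]
  | succ t ih =>
    intro i
    rw [hyrec, sum_range_succ']
    congr 1
    · calc ∑ j, P i j • y j t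
          = ∑ s ∈ range t, ∑ j, P i j • ∑ l, (P ^ s) j l • g l (t - 1 - s) := by
            simp only [ih, smul_sum]; exact sum_comm
        _ = ∑ s ∈ range t, ∑ l, (P ^ (s + 1)) i l • g l (t + 1 - 1 - (s + 1)) := by
            refine sum_congr rfl fun s _ => ?_
            rw [sum_smul_sum_smul_eq_vecMul, pow_succ',
              show t + 1 - 1 - (s + 1) = t - 1 - s by omega]
            rfl
    · simp [Matrix.one_apply, ite_smul]

end Recurrence

theorem sum_smul_sub_eq_sum_pow_smul {R E ι : Type*} [CommRing R] [AddCommGroup E] [Module R E]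
    [Fintype ι] [DecidableEq ι] {P : Matrix ι ι R} {π : ι → R} (hπ : π ᵥ* P = π)
    {y g : ι → ℕ → E} (hy0 : ∀ i, y i 0 = 0)
    (hyrec : ∀ i t, y i (t + 1) = ∑ j, P i j • y j t + g i t) (i : ι) (t : ℕ) :
    ∑ k, π k • y k t - y i t = ∑ s ∈ range t, ∑ l, (π l - (P ^ s) i l) • g l (t - 1 - s) := by
  have hy := eq_sum_pow_smul_of_recurrence hy0 hyrec t
  have hmean : ∑ k, π k • y k t = ∑ s ∈ range t, ∑ l, π l • g l (t - 1 - s) :=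
    calc ∑ k, π k • y k t
        = ∑ k, ∑ s ∈ range t, π k • ∑ l, (P ^ s) k l • g l (t - 1 - s) :=
          sum_congr rfl fun k _ => by rw [hy, smul_sum]
      _ = ∑ s ∈ range t, ∑ l, π l • g l (t - 1 - s) := by
          rw [sum_comm]
          simp only [sum_smul_sum_smul_eq_vecMul, vecMul_pow_eq_self hπ]
  rw [hmean, hy]
  simp only [← sum_sub_distrib, sub_smul]

theorem sum_abs_sub_le_two {ι : Type*} {s : Finset ι} {u v : ι → ℝ}
    (hu : ∀ i ∈ s, 0 ≤ u i) (hv : ∀ i ∈ s, 0 ≤ v i)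
    (hu1 : ∑ i ∈ s, u i = 1) (hv1 : ∑ i ∈ s, v i = 1) :
    ∑ i ∈ s, |u i - v i| ≤ 2 :=
  calc ∑ i ∈ s, |u i - v i| ≤ ∑ i ∈ s, (u i + v i) :=
        sum_le_sum fun i hi => abs_sub_le_iff.2 ⟨by linarith [hv i hi], by linarith [hu i hi]⟩
    _ = 2 := by rw [sum_add_distrib, hu1, hv1]; norm_num

theorem pow_div_le_rpow_pow_div {γ : ℝ} (hγ0 : 0 < γ) (hγ1 : γ ≤ 1) {ν : ℕ} (hν : 0 < ν)
    (k : ℕ) : γ ^ (k / ν) ≤ (γ ^ ((1 : ℝ) / ν)) ^ k / γ := by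
  have hβν : (γ ^ ((1 : ℝ) / ν)) ^ ν = γ := by
    rw [one_div]; exact Real.rpow_inv_natCast_pow hγ0.le hν.ne'
  set β := γ ^ ((1 : ℝ) / ν)
  have hβ1 : β ≤ 1 := Real.rpow_le_one hγ0.le hγ1 (by positivity)
  rw [le_div_iff₀ hγ0]
  calc γ ^ (k / ν) * γ = β ^ (ν * (k / ν + 1)) := by rw [pow_mul, hβν, pow_succ]
    _ ≤ β ^ k := pow_le_pow_of_le_one (by positivity) hβ1
        (Nat.lt_mul_div_succ k hν).le

theorem sum_range_le_add_div_one_sub {D : ℕ → ℝ} {a b β : ℝ} (ha : 0 ≤ a) (hb : 0 ≤ b)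
    (hβ0 : 0 ≤ β) (hβ1 : β < 1) (hD0 : D 0 ≤ a) (hD : ∀ k, D (k + 1) ≤ b * β ^ (k + 1))
    (t : ℕ) : ∑ k ∈ range t, D k ≤ a + b / (1 - β) := by
  cases t with
  | zero => rw [sum_range_zero]; have := sub_pos.2 hβ1; positivity
  | succ t =>
    have htail : ∑ k ∈ range t, β ^ (k + 1) ≤ 1 / (1 - β) := by
      have hgeom := geom_sum_Ico_le_of_lt_one (m := 0) (n := t + 1) hβ0 hβ1
      rw [← range_eq_Ico, sum_range_succ', pow_zero] at hgeom
      linarith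
    calc ∑ k ∈ range (t + 1), D k = ∑ k ∈ range t, D (k + 1) + D 0 := sum_range_succ' D t
      _ ≤ b * ∑ k ∈ range t, β ^ (k + 1) + a := by
          rw [mul_sum]; exact add_le_add (sum_le_sum fun k _ => hD k) hD0
      _ ≤ b * (1 / (1 - β)) + a := by gcongr
      _ = a + b / (1 - β) := by ring

theorem sum_range_sum_abs_pow_sub_le {ι : Type*} [Fintype ι] [DecidableEq ι]
    {P : Matrix ι ι ℝ} {π : ι → ℝ} (hπ0 : ∀ j, 0 ≤ π j) (hπ1 : ∑ j, π j = 1)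
    {γ : ℝ} (hγ0 : 0 < γ) (hγ1 : γ < 1) {ν : ℕ} (hν : 0 < ν)
    (hmix : ∀ k : ℕ, 1 ≤ k → ∀ i j, |(P ^ k) i j - π j| ≤ γ ^ (k / ν)) (i : ι) (t : ℕ) :
    ∑ s ∈ range t, ∑ j, |(P ^ s) i j - π j| ≤
      2 + Fintype.card ι / (γ * (1 - γ ^ ((1 : ℝ) / ν))) := by
  set β := γ ^ ((1 : ℝ) / ν)
  have hβ1 : β < 1 := Real.rpow_lt_one hγ0.le hγ1 (by positivity)
  rw [← div_div]
  refine sum_range_le_add_div_one_sub zero_le_two (by positivity) (by positivity) hβ1 ?_ ?_ t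
  · rw [pow_zero]
    exact sum_abs_sub_le_two (fun j _ => by rw [Matrix.one_apply]; positivity)
      (fun j _ => hπ0 j) (by simp [Matrix.one_apply]) hπ1
  · intro k
    calc ∑ j, |(P ^ (k + 1)) i j - π j| ≤ ∑ _j : ι, β ^ (k + 1) / γ :=
          sum_le_sum fun j _ => (hmix (k + 1) (by omega) i j).trans
            (pow_div_le_rpow_pow_div hγ0 hγ1.le hν _)
      _ = Fintype.card ι / γ * β ^ (k + 1) := by
          rw [sum_const, card_univ, nsmul_eq_mul]; ring

theorem dual_average_deviation_bound_general {m : ℕ} (n : ℕ)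
    -- `N` is a norm on `ℝ^m` and `Nd` its dual norm
    (N : EuclideanSpace ℝ (Fin m) → ℝ)
    (hNtri : ∀ a b, N (a + b) ≤ N a + N b)
    (hNsmul : ∀ (c : ℝ) (a : EuclideanSpace ℝ (Fin m)), N (c • a) = |c| * N a)
    (hNdef : ∀ a, N a = 0 ↔ a = 0)
    (Nd : EuclideanSpace ℝ (Fin m) → ℝ)
    (hNd : ∀ v, Nd v = sSup {r : ℝ | ∃ a, N a ≤ 1 ∧ r = ⟪v, a⟫})
    -- `P` is row-stochastic with stationary distribution `π ∈ (0,1)^n`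
    (P : Matrix (Fin n) (Fin n) ℝ)
    (π : Fin n → ℝ) (hπ0 : ∀ i, 0 < π i)
    (hπsum : ∑ i, π i = 1) (hπstat : ∀ j, ∑ i, π i * P i j = π j)
    -- the dual variables and their bounded increments
    (L : ℝ) (hL : 0 ≤ L)
    (g y : Fin n → ℕ → EuclideanSpace ℝ (Fin m))
    (hg : ∀ i t, Nd (g i t) ≤ L)
    (hy0 : ∀ i, y i 0 = 0)
    (hyrec : ∀ i t, y i (t + 1) = (∑ j, P i j • y j t) + g i t)
    -- the weighted dual average
    (ybar : ℕ → EuclideanSpace ℝ (Fin m))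
    (hybar : ∀ t, ybar t = ∑ i, π i • y i t)
    -- geometric mixing of the matrix powers of `P` (`k / ν` is `⌊k/ν⌋`)
    (γ : ℝ) (hγ0 : 0 < γ) (hγ1 : γ < 1) (ν : ℕ) (hν : 1 ≤ ν)
    (hmix : ∀ k : ℕ, 1 ≤ k → ∀ i j, |(P ^ k) i j - π j| ≤ γ ^ (k / ν)) :
    ∀ (i : Fin n) (t : ℕ),
      Nd (ybar t - y i t) ≤ n * L / (γ * (1 - γ ^ ((1 : ℝ) / (ν : ℝ)))) + 2 * L := by
  intro i t
  set p : Seminorm ℝ (EuclideanSpace ℝ (Fin m)) := Seminorm.of N hNtri hNsmul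
  have hp : ∀ a, p a = 0 → a = 0 := fun a => (hNdef a).1
  have hNd' : Nd = dualNorm p := funext hNd
  have hmixsum := sum_range_sum_abs_pow_sub_le (fun j => (hπ0 j).le) hπsum hγ0 hγ1 hν hmix i t
  rw [Fintype.card_fin] at hmixsum
  calc Nd (ybar t - y i t)
      = dualNorm p (∑ s ∈ range t, ∑ l, (π l - (P ^ s) i l) • g l (t - 1 - s)) := by
        rw [hNd', hybar, sum_smul_sub_eq_sum_pow_smul (funext hπstat) hy0 hyrec]
    _ ≤ ∑ s ∈ range t, ∑ l, |π l - (P ^ s) i l| * L := by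
        refine (dualNorm_sum_le hp _ _).trans (sum_le_sum fun s _ =>
          (dualNorm_sum_le hp _ _).trans (sum_le_sum fun l _ => ?_))
        exact (dualNorm_smul_le hp _ _).trans (by rw [← hNd']; gcongr; exact hg l _)
    _ = L * ∑ s ∈ range t, ∑ l, |(P ^ s) i l - π l| := by
        simp only [mul_sum, abs_sub_comm, mul_comm]
    _ ≤ L * (2 + n / (γ * (1 - γ ^ ((1 : ℝ) / ν)))) := mul_le_mul_of_nonneg_left hmixsum hL
    _ = n * L / (γ * (1 - γ ^ ((1 : ℝ) / (ν : ℝ)))) + 2 * L := by ring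

/-- **Lemma 2 (bound on the deviation of the dual variables from their weighted average).**
For the distributed dual averaging recursion `y_{i,t+1} = Σ_j P_{ij} y_{j,t} + g_{i,t}` with
`y_{i,0} = 0`, dual-norm-bounded increments `‖g_{i,t}‖_* ≤ L`, a row-stochastic matrix `P`
with stationary distribution `π ∈ (0,1)^n`, and geometric mixing
`|(P^k)_{ij} − π_j| ≤ γ^⌊k/ν⌋`, the weighted average `ȳ_t = Σ_i π_i y_{i,t}` satisfies
`‖ȳ_t − y_{i,t}‖_* ≤ nL/(γ(1 − γ^{1/ν})) + 2L` for all `i` and `t`. -/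
theorem dual_average_deviation_bound {m : ℕ} (n : ℕ) (hn : 1 ≤ n)
    -- `N` is a norm on `ℝ^m` and `Nd` its dual norm
    (N : EuclideanSpace ℝ (Fin m) → ℝ)
    (hNtri : ∀ a b, N (a + b) ≤ N a + N b)
    (hNsmul : ∀ (c : ℝ) (a : EuclideanSpace ℝ (Fin m)), N (c • a) = |c| * N a)
    (hNdef : ∀ a, N a = 0 ↔ a = 0)
    (Nd : EuclideanSpace ℝ (Fin m) → ℝ)
    (hNd : ∀ v, Nd v = sSup {r : ℝ | ∃ a, N a ≤ 1 ∧ r = ⟪v, a⟫})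
    -- `P` is row-stochastic with stationary distribution `π ∈ (0,1)^n`
    (P : Matrix (Fin n) (Fin n) ℝ)
    (hPnn : ∀ i j, 0 ≤ P i j) (hProw : ∀ i, ∑ j, P i j = 1)
    (π : Fin n → ℝ) (hπ0 : ∀ i, 0 < π i) (hπ1 : ∀ i, π i < 1)
    (hπsum : ∑ i, π i = 1) (hπstat : ∀ j, ∑ i, π i * P i j = π j)
    -- the dual variables and their bounded increments
    (L : ℝ) (hL : 0 ≤ L)
    (g y : Fin n → ℕ → EuclideanSpace ℝ (Fin m))
    (hg : ∀ i t, Nd (g i t) ≤ L)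
    (hy0 : ∀ i, y i 0 = 0)
    (hyrec : ∀ i t, y i (t + 1) = (∑ j, P i j • y j t) + g i t)
    -- the weighted dual average
    (ybar : ℕ → EuclideanSpace ℝ (Fin m))
    (hybar : ∀ t, ybar t = ∑ i, π i • y i t)
    -- geometric mixing of the matrix powers of `P` (`k / ν` is `⌊k/ν⌋`)
    (γ : ℝ) (hγ0 : 0 < γ) (hγ1 : γ < 1) (ν : ℕ) (hν : 1 ≤ ν)
    (hmix : ∀ k : ℕ, 1 ≤ k → ∀ i j, |(P ^ k) i j - π j| ≤ γ ^ (k / ν)) :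
    ∀ (i : Fin n) (t : ℕ),
      Nd (ybar t - y i t) ≤ n * L / (γ * (1 - γ ^ ((1 : ℝ) / (ν : ℝ)))) + 2 * L :=
  dual_average_deviation_bound_general n N hNtri hNsmul hNdef Nd hNd P π hπ0 hπsum hπstat L hL g y
    hg hy0 hyrec ybar hybar γ hγ0 hγ1 ν hν hmix
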